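/- Let V be a finite set of nodes, E ⊆ V × V a finite set of directed edges, and α, β positive integers. Let Θ be a finite index set of attacker pure strategies, where each θ ∈ Θ consists of a seed set S_θ ⊆ V and edge probabilities p_θ : E → ℝ with 0 ≤ p_θ(e) ≤ 1, and let ρ_θ(M) = Σ_{X ⊆ E} Pr_{p_θ}[X] · ρ^X_{S_θ}(M). Let y : Θ → ℝ with y(θ) ≥ 0 for all θ. Then the defender's expected utility M ↦ Σ_{θ ∈ Θ} y(θ) · ρ_θ(M) is submodular as a function of the monitor set M ⊆ V. -/
import Mathlib


open scoped Classical

/-- The infected sets of the live-edge diffusion process: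
`I_S(0) = S` and `I_S(t+1) = I_S(t) ∪ {w : ∃ v ∈ I_S(t), (v,w) ∈ X}`. -/
noncomputable def infect {V : Type*} [Fintype V] [DecidableEq V]
    (X : Finset (V × V)) (S : Finset V) : ℕ → Finset V
  | 0 => S
  | t + 1 => infect X S t ∪
      Finset.univ.filter (fun w => ∃ v ∈ infect X S t, (v, w) ∈ X)

/-- The set of nodes reachable from `S` via live edges of `X`. -/
noncomputable def reachSet {V : Type*} [Fintype V] [DecidableEq V]
    (X : Finset (V × V)) (S : Finset V) : Finset V :=
  Finset.univ.filter (fun u => ∃ t, u ∈ infect X S t)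

/-- The monitor set `M` detects the outbreak before `β`: there exists `t` with
`M ∩ I_S(t) ≠ ∅` and `|I_S(t)| ≤ β`. -/
def detects {V : Type*} [Fintype V] [DecidableEq V]
    (X : Finset (V × V)) (S : Finset V) (β : ℕ) (M : Finset V) : Prop :=
  ∃ t, (M ∩ infect X S t).Nonempty ∧ (infect X S t).card ≤ β

/-- The defender win indicator `ρ^X_S(M)`: equal to `1` if either the set of
nodes reachable from `S` via live edges of `X` has size less than `α`, or `M`
detects the outbreak before `β`; and `0` otherwise. -/
noncomputable def rho {V : Type*} [Fintype V] [DecidableEq V]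
    (X : Finset (V × V)) (S : Finset V) (α β : ℕ) (M : Finset V) : ℝ :=
  if (reachSet X S).card < α ∨ detects X S β M then 1 else 0

/-- The live-edge probability `Pr_p[X] = (∏_{e ∈ X} p e) · (∏_{e ∈ E \ X} (1 - p e))`. -/
noncomputable def liveProb {ι : Type*} [DecidableEq ι]
    (E : Finset ι) (p : ι → ℝ) (X : Finset ι) : ℝ :=
  (∏ e ∈ X, p e) * (∏ e ∈ E \ X, (1 - p e))

lemma detects_mono {V : Type*} [Fintype V] [DecidableEq V]
    (X : Finset (V × V)) (S : Finset V) (β : ℕ) {A B : Finset V} (h : A ⊆ B) :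
    detects X S β A → detects X S β B := by
  rintro ⟨t, ⟨u, hu⟩, hc⟩
  exact ⟨t, ⟨u, Finset.mem_inter.2 ⟨h (Finset.mem_inter.1 hu).1, (Finset.mem_inter.1 hu).2⟩⟩, hc⟩

lemma rho_submod {V : Type*} [Fintype V] [DecidableEq V]
    (X : Finset (V × V)) (S : Finset V) (α β : ℕ) {A B : Finset V} (hAB : A ⊆ B) (v : V) :
    rho X S α β (insert v B) - rho X S α β B ≤ rho X S α β (insert v A) - rho X S α β A := by
  unfold rho
  by_cases hc : (reachSet X S).card < α
  · simp [hc]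
  by_cases hB : detects X S β B
  · have hA' : detects X S β (insert v B) := detects_mono X S β (Finset.subset_insert v B) hB
    simp only [hc, hB, hA', false_or, if_true]
    by_cases hA : detects X S β A
    · have := detects_mono X S β (Finset.subset_insert v A) hA
      simp [hA, this]
    · by_cases hiA : detects X S β (insert v A) <;> simp [hA, hiA] <;> norm_num
  · have hA : ¬ detects X S β A := fun h => hB (detects_mono X S β hAB h)
    by_cases hiB : detects X S β (insert v B)
    · have hiA : detects X S β (insert v A) := by
        obtain ⟨t, ⟨u, hu⟩, hcard⟩ := hiB
        rw [Finset.mem_inter, Finset.mem_insert] at hu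
        rcases hu.1 with rfl | huB
        · exact ⟨t, ⟨u, Finset.mem_inter.2 ⟨Finset.mem_insert_self u A, hu.2⟩⟩, hcard⟩
        · exact absurd ⟨t, ⟨u, Finset.mem_inter.2 ⟨huB, hu.2⟩⟩, hcard⟩ hB
      simp [hc, hA, hB, hiA, hiB]
    · by_cases hiA : detects X S β (insert v A) <;> simp [hc, hA, hB, hiA, hiB] <;> norm_num

lemma liveProb_nonneg {ι : Type*} [DecidableEq ι] (E : Finset ι) (p : ι → ℝ)
    (hp : ∀ e ∈ E, 0 ≤ p e ∧ p e ≤ 1) {X : Finset ι} (hX : X ⊆ E) :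
    0 ≤ liveProb E p X := by
  apply mul_nonneg
  · exact Finset.prod_nonneg fun e he => (hp e (hX he)).1
  · exact Finset.prod_nonneg fun e he => by
      have := (hp e (Finset.mem_sdiff.1 he).1).2; linarith

/-- Given an attacker's mixed strategy `y` over a finite set `Θ` of pure
strategies `θ = (S_θ, p_θ)`, the defender's expected utility
`M ↦ Σ_{θ ∈ Θ} y θ · Σ_{X ⊆ E} Pr_{p_θ}[X] · ρ^X_{S_θ}(M)` is submodular. -/
theorem stmt4 {V : Type*} [Fintype V] [DecidableEq V] {Θ : Type*}
    (E : Finset (V × V)) (α β : ℕ) (hα : 0 < α) (hβ : 0 < β)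
    (T : Finset Θ) (Sθ : Θ → Finset V) (pθ : Θ → V × V → ℝ)
    (hp : ∀ θ ∈ T, ∀ e ∈ E, 0 ≤ pθ θ e ∧ pθ θ e ≤ 1)
    (y : Θ → ℝ) (hy : ∀ θ ∈ T, 0 ≤ y θ)
    (A B : Finset V) (hAB : A ⊆ B) (v : V) :
    (∑ θ ∈ T, y θ * ∑ X ∈ E.powerset, liveProb E (pθ θ) X * rho X (Sθ θ) α β (insert v A)) -
        (∑ θ ∈ T, y θ * ∑ X ∈ E.powerset, liveProb E (pθ θ) X * rho X (Sθ θ) α β A) ≥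
      (∑ θ ∈ T, y θ * ∑ X ∈ E.powerset, liveProb E (pθ θ) X * rho X (Sθ θ) α β (insert v B)) -
        (∑ θ ∈ T, y θ * ∑ X ∈ E.powerset, liveProb E (pθ θ) X * rho X (Sθ θ) α β B) := by
  rw [ge_iff_le, sub_le_sub_iff]
  have key : ∀ θ ∈ T,
      y θ * ∑ X ∈ E.powerset, liveProb E (pθ θ) X * rho X (Sθ θ) α β (insert v B) +
        y θ * ∑ X ∈ E.powerset, liveProb E (pθ θ) X * rho X (Sθ θ) α β A ≤
      y θ * ∑ X ∈ E.powerset, liveProb E (pθ θ) X * rho X (Sθ θ) α β (insert v A) +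
        y θ * ∑ X ∈ E.powerset, liveProb E (pθ θ) X * rho X (Sθ θ) α β B := by
    intro θ hθ
    rw [← mul_add, ← mul_add]
    apply mul_le_mul_of_nonneg_left _ (hy θ hθ)
    rw [← Finset.sum_add_distrib, ← Finset.sum_add_distrib]
    apply Finset.sum_le_sum
    intro X hX
    rw [← mul_add, ← mul_add]
    apply mul_le_mul_of_nonneg_left _
      (liveProb_nonneg E (pθ θ) (hp θ hθ) (Finset.mem_powerset.1 hX))
    have := rho_submod X (Sθ θ) α β hAB v
    linarith
  calc _ = ∑ θ ∈ T, (y θ * ∑ X ∈ E.powerset, liveProb E (pθ θ) X * rho X (Sθ θ) α β (insert v B) +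
        y θ * ∑ X ∈ E.powerset, liveProb E (pθ θ) X * rho X (Sθ θ) α β A) := by
        rw [Finset.sum_add_distrib]
    _ ≤ ∑ θ ∈ T, (y θ * ∑ X ∈ E.powerset, liveProb E (pθ θ) X * rho X (Sθ θ) α β (insert v A) +
        y θ * ∑ X ∈ E.powerset, liveProb E (pθ θ) X * rho X (Sθ θ) α β B) :=
        Finset.sum_le_sum key
    _ = _ := by rw [Finset.sum_add_distrib]
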